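/- Suppose Φ ⊆ {I, O, U} and let R be an RBox (finite set of role axioms of the forms ε ⊑ r or R₁∘…∘R_k ⊑ r with the R_i basic roles). Let I₀ be a model of R, let Z be an L_Φ-bisimulation between I₀ and an interpretation I₁, and let I₁' be the least r-extension of I₁ validating R. Then Z is an L_Φ-bisimulation between I₀ and I₁'. -/

import Mathlib

/-- A set of DL-features (subset of {I, O, Q, U, Self}). -/
structure DLFeat where
  hasI : Bool
  hasO : Bool
  hasQ : Bool
  hasU : Bool
  hasSelf : Bool

/-- An interpretation with concept names `CN`, role names `RN`, individual names `IN`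
and domain `D`. -/
structure Interp (CN RN IN : Type) (D : Type) where
  cInt : CN → Set D
  rInt : RN → D → D → Prop
  iInt : IN → D

/-- Interpretation of a basic role: a role name, possibly inverted. -/
def brInt {CN RN IN D : Type} (I : Interp CN RN IN D) (R : RN × Bool) (x y : D) : Prop :=
  if R.2 then I.rInt R.1 y x else I.rInt R.1 x y

mutual
/-- Concepts of the full language (membership in `L_Φ` is a separate predicate). -/
inductive DLConcept (CN RN IN : Type) : Type where
  | atom (A : CN)
  | top
  | bot
  | neg (C : DLConcept CN RN IN)
  | conj (C D : DLConcept CN RN IN)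
  | disj (C D : DLConcept CN RN IN)
  | all (R : DLRole CN RN IN) (C : DLConcept CN RN IN)
  | ex (R : DLRole CN RN IN) (C : DLConcept CN RN IN)
  | nom (a : IN)
  | atLeast (n : ℕ) (r : RN) (inverted : Bool) (C : DLConcept CN RN IN)
  | atMost (n : ℕ) (r : RN) (inverted : Bool) (C : DLConcept CN RN IN)
  | exSelf (r : RN)
/-- Roles of the full language. -/
inductive DLRole (CN RN IN : Type) : Type where
  | name (r : RN)
  | eps
  | comp (R S : DLRole CN RN IN)
  | runion (R S : DLRole CN RN IN)
  | star (R : DLRole CN RN IN)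
  | test (C : DLConcept CN RN IN)
  | inv (r : RN)
  | univ
end

mutual
/-- The concept belongs to the language `L_Φ`. -/
def DLConcept.inL {CN RN IN : Type} (Φ : DLFeat) : DLConcept CN RN IN → Prop
  | .atom _ => True
  | .top => True
  | .bot => True
  | .neg C => C.inL Φ
  | .conj C D => C.inL Φ ∧ D.inL Φ
  | .disj C D => C.inL Φ ∧ D.inL Φ
  | .all R C => R.inL Φ ∧ C.inL Φ
  | .ex R C => R.inL Φ ∧ C.inL Φ
  | .nom _ => Φ.hasO = true
  | .atLeast _ _ b C => Φ.hasQ = true ∧ (b = true → Φ.hasI = true) ∧ C.inL Φ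
  | .atMost _ _ b C => Φ.hasQ = true ∧ (b = true → Φ.hasI = true) ∧ C.inL Φ
  | .exSelf _ => Φ.hasSelf = true
/-- The role belongs to the language `L_Φ`. -/
def DLRole.inL {CN RN IN : Type} (Φ : DLFeat) : DLRole CN RN IN → Prop
  | .name _ => True
  | .eps => True
  | .comp R S => R.inL Φ ∧ S.inL Φ
  | .runion R S => R.inL Φ ∧ S.inL Φ
  | .star R => R.inL Φ
  | .test C => C.inL Φ
  | .inv _ => Φ.hasI = true
  | .univ => Φ.hasU = true
end

mutual
/-- Semantics of concepts. -/
def DLConcept.sem {CN RN IN D : Type} (I : Interp CN RN IN D) : DLConcept CN RN IN → Set D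
  | .atom A => I.cInt A
  | .top => Set.univ
  | .bot => ∅
  | .neg C => (DLConcept.sem I C)ᶜ
  | .conj C C' => DLConcept.sem I C ∩ DLConcept.sem I C'
  | .disj C C' => DLConcept.sem I C ∪ DLConcept.sem I C'
  | .all R C => {x | ∀ y, DLRole.sem I R x y → y ∈ DLConcept.sem I C}
  | .ex R C => {x | ∃ y, DLRole.sem I R x y ∧ y ∈ DLConcept.sem I C}
  | .nom a => {I.iInt a}
  | .atLeast n r b C =>
      {x | (n : Cardinal) ≤ Cardinal.mk {y // brInt I (r, b) x y ∧ y ∈ DLConcept.sem I C}}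
  | .atMost n r b C =>
      {x | Cardinal.mk {y // brInt I (r, b) x y ∧ y ∈ DLConcept.sem I C} ≤ (n : Cardinal)}
  | .exSelf r => {x | I.rInt r x x}
/-- Semantics of roles. -/
def DLRole.sem {CN RN IN D : Type} (I : Interp CN RN IN D) : DLRole CN RN IN → D → D → Prop
  | .name r => I.rInt r
  | .eps => Eq
  | .comp R S => Relation.Comp (DLRole.sem I R) (DLRole.sem I S)
  | .runion R S => fun x y => DLRole.sem I R x y ∨ DLRole.sem I S x y
  | .star R => Relation.ReflTransGen (DLRole.sem I R)
  | .test C => fun x y => x = y ∧ x ∈ DLConcept.sem I C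
  | .inv r => fun x y => I.rInt r y x
  | .univ => fun _ _ => True
end

/-- `Z` is an `L_Φ`-bisimulation between `I` and `I'`. -/
def Bisim {CN RN IN D D' : Type} (Φ : DLFeat) (I : Interp CN RN IN D)
    (I' : Interp CN RN IN D') (Z : D → D' → Prop) : Prop :=
  (∀ a : IN, Z (I.iInt a) (I'.iInt a)) ∧
  (∀ (A : CN) x x', Z x x' → (x ∈ I.cInt A ↔ x' ∈ I'.cInt A)) ∧
  (∀ (r : RN) x x' y, Z x x' → I.rInt r x y → ∃ y', Z y y' ∧ I'.rInt r x' y') ∧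
  (∀ (r : RN) x x' y', Z x x' → I'.rInt r x' y' → ∃ y, Z y y' ∧ I.rInt r x y) ∧
  (Φ.hasI = true →
    (∀ (r : RN) x x' y, Z x x' → I.rInt r y x → ∃ y', Z y y' ∧ I'.rInt r y' x') ∧
    (∀ (r : RN) x x' y', Z x x' → I'.rInt r y' x' → ∃ y, Z y y' ∧ I.rInt r y x)) ∧
  (Φ.hasO = true → ∀ (a : IN) x x', Z x x' → (x = I.iInt a ↔ x' = I'.iInt a)) ∧
  (Φ.hasQ = true → ∀ (r : RN) x x', Z x x' →
    ∃ h : {y // I.rInt r x y} ≃ {y' // I'.rInt r x' y'}, ∀ y, Z y.1 (h y).1) ∧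
  (Φ.hasQ = true → Φ.hasI = true → ∀ (r : RN) x x', Z x x' →
    ∃ h : {y // I.rInt r y x} ≃ {y' // I'.rInt r y' x'}, ∀ y, Z y.1 (h y).1) ∧
  (Φ.hasU = true → (∀ x, ∃ x', Z x x') ∧ (∀ x', ∃ x, Z x x')) ∧
  (Φ.hasSelf = true → ∀ (r : RN) x x', Z x x' → (I.rInt r x x ↔ I'.rInt r x' x'))

/-- One step along a basic role (role name, or inverse of a role name if `I ∈ Φ`). -/
def basicStep {CN RN IN D : Type} (Φ : DLFeat) (I : Interp CN RN IN D) (x y : D) : Prop :=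
  ∃ r : RN, I.rInt r x y ∨ (Φ.hasI = true ∧ I.rInt r y x)

/-- `I` is unreachable-objects-free: every element is reachable from some named
individual via a finite path of basic-role edges. -/
def UOF {CN RN IN D : Type} (Φ : DLFeat) (I : Interp CN RN IN D) : Prop :=
  ∀ x : D, ∃ a : IN, Relation.ReflTransGen (basicStep Φ I) (I.iInt a) x

/-- `I` validates the GCI `C ⊑ C'`. -/
def satGCI {CN RN IN D : Type} (I : Interp CN RN IN D) (C C' : DLConcept CN RN IN) : Prop :=
  DLConcept.sem I C ⊆ DLConcept.sem I C'

/-- `I` is a model of the TBox `T`. -/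
def modelsTBox {CN RN IN D : Type} (I : Interp CN RN IN D)
    (T : Set (DLConcept CN RN IN × DLConcept CN RN IN)) : Prop :=
  ∀ p ∈ T, satGCI I p.1 p.2

/-- Individual assertions. -/
inductive Assertion (CN RN IN : Type) : Type where
  | conc (C : DLConcept CN RN IN) (a : IN)
  | rolePos (R : DLRole CN RN IN) (a b : IN)
  | roleNeg (R : DLRole CN RN IN) (a b : IN)
  | eq (a b : IN)
  | neq (a b : IN)

/-- The assertion belongs to `L_Φ`. -/
def Assertion.inL {CN RN IN : Type} (Φ : DLFeat) : Assertion CN RN IN → Prop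
  | .conc C _ => C.inL Φ
  | .rolePos R _ _ => R.inL Φ
  | .roleNeg R _ _ => R.inL Φ
  | .eq _ _ => True
  | .neq _ _ => True

/-- `I` satisfies the individual assertion. -/
def Assertion.sat {CN RN IN D : Type} (I : Interp CN RN IN D) : Assertion CN RN IN → Prop
  | .conc C a => I.iInt a ∈ DLConcept.sem I C
  | .rolePos R a b => DLRole.sem I R (I.iInt a) (I.iInt b)
  | .roleNeg R a b => ¬ DLRole.sem I R (I.iInt a) (I.iInt b)
  | .eq a b => I.iInt a = I.iInt b
  | .neq a b => I.iInt a ≠ I.iInt b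

/-- `I` is a model of the ABox `A`. -/
def modelsABox {CN RN IN D : Type} (I : Interp CN RN IN D) (A : Set (Assertion CN RN IN)) : Prop :=
  ∀ φ ∈ A, φ.sat I

/-- A role axiom `R₁ ∘ … ∘ R_k ⊑ r` (`ε ⊑ r` when the list is empty), the `R_i` basic roles. -/
structure RoleAx (RN : Type) where
  lhs : List (RN × Bool)
  rhs : RN

/-- The role axiom is in `L_Φ` (inverse basic roles only if `I ∈ Φ`). -/
def RoleAx.inL {RN : Type} (Φ : DLFeat) (ax : RoleAx RN) : Prop :=
  ∀ p ∈ ax.lhs, p.2 = true → Φ.hasI = true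

/-- Interpretation of a composition chain of basic roles (`ε` for the empty chain). -/
def chainInt {CN RN IN D : Type} (I : Interp CN RN IN D) : List (RN × Bool) → D → D → Prop
  | [] => Eq
  | R :: l => fun x z => ∃ y, brInt I R x y ∧ chainInt I l y z

/-- `I` validates the role axiom. -/
def satRoleAx {CN RN IN D : Type} (I : Interp CN RN IN D) (ax : RoleAx RN) : Prop :=
  ∀ x y, chainInt I ax.lhs x y → I.rInt ax.rhs x y

/-- `I` is a model of the RBox `R`. -/
def modelsRBox {CN RN IN D : Type} (I : Interp CN RN IN D) (R : Set (RoleAx RN)) : Prop :=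
  ∀ ax ∈ R, satRoleAx I ax

/-- `I'` is an r-extension of `I`. -/
def RExt {CN RN IN D : Type} (I I' : Interp CN RN IN D) : Prop :=
  I'.cInt = I.cInt ∧ I'.iInt = I.iInt ∧ ∀ (r : RN) x y, I.rInt r x y → I'.rInt r x y

/-- `I'` is the least r-extension of `I` validating the RBox `R`. -/
def LeastRExt {CN RN IN D : Type} (I : Interp CN RN IN D) (R : Set (RoleAx RN))
    (I' : Interp CN RN IN D) : Prop :=
  RExt I I' ∧ modelsRBox I' R ∧
    ∀ I'' : Interp CN RN IN D, RExt I I'' → modelsRBox I'' R →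
      ∀ (r : RN) x y, I'.rInt r x y → I''.rInt r x y

/-- `I` is finitely branching w.r.t. `L_Φ`. -/
def FinBranch {CN RN IN D : Type} (Φ : DLFeat) (I : Interp CN RN IN D) : Prop :=
  ∀ (r : RN) (x : D), {y | I.rInt r x y}.Finite ∧ (Φ.hasI = true → {y | I.rInt r y x}.Finite)

/-- `x` and `x'` are `L_Φ`-equivalent: they satisfy the same concepts of `L_Φ`. -/
def LEquiv {CN RN IN D D' : Type} (Φ : DLFeat) (I : Interp CN RN IN D)
    (I' : Interp CN RN IN D') (x : D) (x' : D') : Prop :=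
  ∀ C : DLConcept CN RN IN, C.inL Φ → (x ∈ DLConcept.sem I C ↔ x' ∈ DLConcept.sem I' C)

/-- The largest `L_Φ`-auto-bisimulation of `I` (union of all auto-bisimulations). -/
def gbisim {CN RN IN D : Type} (Φ : DLFeat) (I : Interp CN RN IN D) (x y : D) : Prop :=
  ∃ Z, Bisim Φ I I Z ∧ Z x y

/-- The quotient interpretation of `I` w.r.t. the largest `L_Φ`-auto-bisimulation. -/
def quotInterp {CN RN IN D : Type} (Φ : DLFeat) (I : Interp CN RN IN D) :
    Interp CN RN IN (Quot (gbisim Φ I)) where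
  cInt A := {q | ∃ x, Quot.mk _ x = q ∧ x ∈ I.cInt A}
  rInt r q q' := ∃ x y, Quot.mk _ x = q ∧ Quot.mk _ y = q' ∧ I.rInt r x y
  iInt a := Quot.mk _ (I.iInt a)

/-- A QS-interpretation: an interpretation together with multiplicity functions for
basic roles and self-loop sets for role names. -/
structure QSInterp (CN RN IN D : Type) where
  toInterp : Interp CN RN IN D
  QU : (RN × Bool) → D → D → ℕ
  SE : RN → Set D

/-- The defining positivity condition of QS-interpretations:
`QU R x y > 0` iff `R` connects `x` to `y`. -/
def QSInterp.Proper {CN RN IN D : Type} (J : QSInterp CN RN IN D) : Prop :=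
  ∀ (R : RN × Bool) x y, 0 < J.QU R x y ↔ brInt J.toInterp R x y

/-- `Σ {f y : y ∈ S}` as an extended natural number. -/
noncomputable def qsum {D : Type} (f : D → ℕ) (S : Set D) : ℕ∞ :=
  ⨆ (s : Finset D) (_ : ↑s ⊆ S), (∑ y ∈ s, f y : ℕ∞)

mutual
/-- Semantics of concepts in a QS-interpretation. -/
noncomputable def DLConcept.qsem {CN RN IN D : Type} (J : QSInterp CN RN IN D) :
    DLConcept CN RN IN → Set D
  | .atom A => J.toInterp.cInt A
  | .top => Set.univ
  | .bot => ∅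
  | .neg C => (DLConcept.qsem J C)ᶜ
  | .conj C C' => DLConcept.qsem J C ∩ DLConcept.qsem J C'
  | .disj C C' => DLConcept.qsem J C ∪ DLConcept.qsem J C'
  | .all R C => {x | ∀ y, DLRole.qsem J R x y → y ∈ DLConcept.qsem J C}
  | .ex R C => {x | ∃ y, DLRole.qsem J R x y ∧ y ∈ DLConcept.qsem J C}
  | .nom a => {J.toInterp.iInt a}
  | .atLeast n r b C => {x | (n : ℕ∞) ≤ qsum (J.QU (r, b) x) (DLConcept.qsem J C)}
  | .atMost n r b C => {x | qsum (J.QU (r, b) x) (DLConcept.qsem J C) ≤ (n : ℕ∞)}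
  | .exSelf r => J.SE r
/-- Semantics of roles in a QS-interpretation. -/
noncomputable def DLRole.qsem {CN RN IN D : Type} (J : QSInterp CN RN IN D) :
    DLRole CN RN IN → D → D → Prop
  | .name r => J.toInterp.rInt r
  | .eps => Eq
  | .comp R S => Relation.Comp (DLRole.qsem J R) (DLRole.qsem J S)
  | .runion R S => fun x y => DLRole.qsem J R x y ∨ DLRole.qsem J S x y
  | .star R => Relation.ReflTransGen (DLRole.qsem J R)
  | .test C => fun x y => x = y ∧ x ∈ DLConcept.qsem J C
  | .inv r => fun x y => J.toInterp.rInt r y x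
  | .univ => fun _ _ => True
end

/-- The quotient QS-interpretation of a traditional interpretation `I` w.r.t. the
largest `L_Φ`-auto-bisimulation. -/
noncomputable def qsQuot {CN RN IN D : Type} (Φ : DLFeat) (I : Interp CN RN IN D) :
    QSInterp CN RN IN (Quot (gbisim Φ I)) where
  toInterp := quotInterp Φ I
  QU R q q' := sSup {n | ∃ x, Quot.mk _ x = q ∧
    n = Set.ncard {y | Quot.mk (gbisim Φ I) y = q' ∧ brInt I R x y}}
  SE r := {q | ∃ x, Quot.mk _ x = q ∧ I.rInt r x x}


/-!
Call an edge `x' →ᵣ y'` of `I₁'` back-simulated if every `Z`-preimage of `x'` has an `r`-successor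
in `I₀` that is a `Z`-preimage of `y'` (and dually for predecessors when `I ∈ Φ`). The edges of
`I₁` are back-simulated since `Z` is a bisimulation, and since `I₀` models `R`, every role axiom
applied to a chain of back-simulated edges yields a back-simulated edge. So the back-simulated
edges of `I₁'` form an r-extension of `I₁` validating `R`, and by leastness they are all of `I₁'`.
The forward conditions and the remaining clauses survive enlarging the role relations unchanged.
-/

section ZagAt

variable {D0 D1 : Type}

def ZagAt (S : D0 → D0 → Prop) (Z : D0 → D1 → Prop) (x' y' : D1) : Prop :=
  ∀ x, Z x x' → ∃ y, Z y y' ∧ S x y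

variable {S T : D0 → D0 → Prop} {Z : D0 → D1 → Prop} {x' y' z' : D1}

theorem ZagAt.mono (hST : ∀ x y, S x y → T x y) (h : ZagAt S Z x' y') : ZagAt T Z x' y' :=
  fun x hx => (h x hx).imp fun _ hy => ⟨hy.1, hST _ _ hy.2⟩

theorem ZagAt.comp (hS : ZagAt S Z x' y') (hT : ZagAt T Z y' z') :
    ZagAt (Relation.Comp S T) Z x' z' := by
  intro x hx
  obtain ⟨y, hy, hxy⟩ := hS x hx
  obtain ⟨z, hz, hyz⟩ := hT y hy
  exact ⟨z, hz, y, hxy, hyz⟩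

theorem zagAt_eq (x' : D1) : ZagAt Eq Z x' x' :=
  fun x hx => ⟨x, hx, rfl⟩

end ZagAt

section Chains

variable {CN RN IN D0 D1 : Type}

theorem brInt_mono {I J : Interp CN RN IN D1} (hIJ : ∀ r x y, I.rInt r x y → J.rInt r x y)
    (Rb : RN × Bool) {x y : D1} (h : brInt I Rb x y) : brInt J Rb x y := by
  rcases Rb with ⟨r, _ | _⟩ <;> exact hIJ _ _ _ h

theorem chainInt_mono {I J : Interp CN RN IN D1} (hIJ : ∀ r x y, I.rInt r x y → J.rInt r x y) :
    ∀ (l : List (RN × Bool)) (x y : D1), chainInt I l x y → chainInt J l x y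
  | [], _, _, h => h
  | Rb :: l, _, _, ⟨y, hRb, hl⟩ => ⟨y, brInt_mono hIJ Rb hRb, chainInt_mono hIJ l _ _ hl⟩

variable {I0 : Interp CN RN IN D0} {J : Interp CN RN IN D1} {Z : D0 → D1 → Prop}

theorem zagAt_chainInt : ∀ l : List (RN × Bool),
    (∀ Rb ∈ l, ∀ x' y', brInt J Rb x' y' → ZagAt (brInt I0 Rb) Z x' y') →
    ∀ x' z', chainInt J l x' z' → ZagAt (chainInt I0 l) Z x' z'
  | [], _, x', _, rfl => zagAt_eq x'
  | Rb :: l, h, _, _, ⟨_, hRb, hl⟩ =>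
    (h Rb List.mem_cons_self _ _ hRb).comp
      (zagAt_chainInt l (fun Rb' hRb' => h Rb' (List.mem_cons_of_mem _ hRb')) _ _ hl)

theorem zagAt_flip_chainInt : ∀ l : List (RN × Bool),
    (∀ Rb ∈ l, ∀ x' y', brInt J Rb x' y' → ZagAt (flip (brInt I0 Rb)) Z y' x') →
    ∀ x' z', chainInt J l x' z' → ZagAt (flip (chainInt I0 l)) Z z' x'
  | [], _, _, _, rfl => fun x hx => ⟨x, hx, rfl⟩
  | Rb :: l, h, _, _, ⟨_, hRb, hl⟩ => by
    have hComp := (zagAt_flip_chainInt l (fun Rb' hRb' => h Rb' (List.mem_cons_of_mem _ hRb'))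
      _ _ hl).comp (h Rb List.mem_cons_self _ _ hRb)
    rwa [← Relation.flip_comp] at hComp

end Chains

section LeastRExt

variable {CN RN IN D : Type}

def Interp.restrictRoles (I : Interp CN RN IN D) (P : RN → D → D → Prop) : Interp CN RN IN D :=
  { I with rInt := fun r x y => I.rInt r x y ∧ P r x y }

/-- Induction along the least-fixed-point construction of the least r-extension. -/
theorem LeastRExt.induction {I I' : Interp CN RN IN D} {R : Set (RoleAx RN)}
    (hleast : LeastRExt I R I') (P : RN → D → D → Prop)
    (hbase : ∀ r x y, I.rInt r x y → P r x y)
    (hstep : ∀ ax ∈ R, ∀ x y, chainInt (I'.restrictRoles P) ax.lhs x y → P ax.rhs x y) :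
    ∀ r x y, I'.rInt r x y → P r x y := by
  obtain ⟨⟨hc, hi, hr⟩, hmod, hmin⟩ := hleast
  have hext : RExt I (I'.restrictRoles P) :=
    ⟨hc, hi, fun r x y hxy => ⟨hr r x y hxy, hbase r x y hxy⟩⟩
  have hmodP : modelsRBox (I'.restrictRoles P) R := fun ax hax x y hch =>
    have hch' := chainInt_mono (I := I'.restrictRoles P) (fun _ _ _ h => h.1) _ _ _ hch
    ⟨hmod ax hax x y hch', hstep ax hax x y hch⟩
  exact fun r x y hxy => (hmin _ hext hmodP r x y hxy).2

end LeastRExt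

section Bisimulation

variable {CN RN IN D0 D1 : Type} (Φ : DLFeat) (I0 : Interp CN RN IN D0) (Z : D0 → D1 → Prop)

def BackSimEdge (r : RN) (x' y' : D1) : Prop :=
  ZagAt (I0.rInt r) Z x' y' ∧ (Φ.hasI = true → ZagAt (flip (I0.rInt r)) Z y' x')

variable {Φ I0 Z}

theorem BackSimEdge.zagAt_brInt {J : Interp CN RN IN D1} {Rb : RN × Bool} {x' y' : D1}
    (hRb : Rb.2 = true → Φ.hasI = true)
    (h : brInt (J.restrictRoles (BackSimEdge Φ I0 Z)) Rb x' y') :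
    ZagAt (brInt I0 Rb) Z x' y' := by
  rcases Rb with ⟨r, _ | _⟩
  · exact h.2.1
  · exact h.2.2 (hRb rfl)

theorem BackSimEdge.zagAt_flip_brInt {J : Interp CN RN IN D1} {Rb : RN × Bool} {x' y' : D1}
    (hI : Φ.hasI = true) (h : brInt (J.restrictRoles (BackSimEdge Φ I0 Z)) Rb x' y') :
    ZagAt (flip (brInt I0 Rb)) Z y' x' := by
  rcases Rb with ⟨r, _ | _⟩
  · exact h.2.2 hI
  · exact h.2.1

theorem backSimEdge_of_leastRExt {R : Set (RoleAx RN)} (hR : ∀ ax ∈ R, ax.inL Φ)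
    {I1 I1' : Interp CN RN IN D1} (hI0 : modelsRBox I0 R) (h : Bisim Φ I0 I1 Z)
    (hleast : LeastRExt I1 R I1') :
    ∀ r x' y', I1'.rInt r x' y' → BackSimEdge Φ I0 Z r x' y' := by
  obtain ⟨-, -, -, hzag, hinv, -⟩ := h
  refine hleast.induction _ (fun r x' y' hxy => ⟨?_, fun hI => ?_⟩) fun ax hax x' z' hch => ⟨?_, ?_⟩
  · exact fun x hx => hzag r x x' y' hx hxy
  · exact fun y hy => (hinv hI).2 r y y' x' hy hxy
  · exact (zagAt_chainInt ax.lhs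
      (fun Rb hRb _ _ hb => BackSimEdge.zagAt_brInt (hR ax hax Rb hRb) hb) x' z' hch).mono
      (hI0 ax hax)
  · intro hI
    exact (zagAt_flip_chainInt ax.lhs (fun _ _ _ _ hb => BackSimEdge.zagAt_flip_brInt hI hb)
      x' z' hch).mono fun _ _ => hI0 ax hax _ _

theorem Bisim.of_rExt (hQ : Φ.hasQ = false) (hS : Φ.hasSelf = false)
    {I1 I1' : Interp CN RN IN D1} (h : Bisim Φ I0 I1 Z) (hext : RExt I1 I1')
    (hback : ∀ r x' y', I1'.rInt r x' y' → BackSimEdge Φ I0 Z r x' y') :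
    Bisim Φ I0 I1' Z := by
  obtain ⟨hc, hi, hr⟩ := hext
  obtain ⟨hnom, hatom, hzig, -, hinv, hO, -, -, hU, -⟩ := h
  refine ⟨?_, ?_, ?_, ?_, fun hI => ⟨?_, ?_⟩, ?_, by simp [hQ], by simp [hQ], hU, by simp [hS]⟩
  · simpa only [hi] using hnom
  · simpa only [hc] using hatom
  · intro r x x' y hx hxy
    obtain ⟨y', hy, hxy'⟩ := hzig r x x' y hx hxy
    exact ⟨y', hy, hr r x' y' hxy'⟩
  · exact fun r x x' y' hx hxy => (hback r x' y' hxy).1 x hx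
  · intro r x x' y hx hyx
    obtain ⟨y', hy, hyx'⟩ := (hinv hI).1 r x x' y hx hyx
    exact ⟨y', hy, hr r y' x' hyx'⟩
  · exact fun r x x' y' hx hyx => (hback r y' x' hyx).2 hI x hx
  · simpa only [hi] using hO

end Bisimulation

/-- For `Φ ⊆ {I,O,U}`, if `I₀` models the RBox `R`, `Z` is an
`L_Φ`-bisimulation between `I₀` and `I₁`, and `I₁'` is the least r-extension of `I₁`
validating `R`, then `Z` is an `L_Φ`-bisimulation between `I₀` and `I₁'`. -/
theorem rbox_preservation {CN RN IN D0 D1 : Type} (Φ : DLFeat)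
    (hQ : Φ.hasQ = false) (hS : Φ.hasSelf = false)
    (R : Set (RoleAx RN)) (hfin : R.Finite) (hR : ∀ ax ∈ R, ax.inL Φ)
    (I0 : Interp CN RN IN D0) (I1 I1' : Interp CN RN IN D1)
    (hI0 : modelsRBox I0 R) (Z : D0 → D1 → Prop) (h : Bisim Φ I0 I1 Z)
    (hleast : LeastRExt I1 R I1') :
    Bisim Φ I0 I1' Z :=
  h.of_rExt hQ hS hleast.1 (backSimEdge_of_leastRExt hR hI0 h hleast)
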